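/- In the multi-region setup, fix a region r with I_r nonempty and a nonnegative integer k. Assume hypotheses (i)–(iv) as follows: (i) for every i ∈ I_r and t ∈ Ī_i, ‖Q_{t,i}ᵀ(L_t − L*_t)e_{f_t^i}‖_{ℓ2} ≤ l₀·σ*_t·qᵏ/√(n_t); (ii) for every t ∈ U_r, E_t = S*_t − S_t has at most α_t·m_t nonzero entries per column and ‖E_t‖_{ℓ∞} ≤ s₀·σ*_t·qᵏ/√(m_t n_t), and additionally E_r has at most α'_r·n_r nonzero entries per row; (iii) ‖P^i_{r,t}‖_2 ≤ √(σ*_r/σ*_t)·(m_t n_t/(m_r n_r))^{1/4}; (iv) ‖Q_{t,i}ᵀe_p‖_{ℓ2} ≤ ν√(d/m_t) for all row indices p. With G_r, F_r, M_r = G_r + F_r + E_r, ω_r, α̃_r defined as in the multi-region setup, for every v ∈ ℝ^{n_r}: ‖M_r v‖_{ℓ∞} ≤ [ s₀·(α'_r + α̃_r·ν²d) + l₀·ν·√d·ω_r ]·σ*_r·qᵏ·√(n_r/m_r)·‖v‖_{ℓ∞}. -/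

import Mathlib

open Matrix
open scoped BigOperators

noncomputable def l2 {n : ℕ} (v : Fin n → ℝ) : ℝ := Real.sqrt (∑ i, v i ^ 2)

noncomputable def vinf {n : ℕ} (v : Fin n → ℝ) : ℝ := ⨆ i, |v i|

noncomputable def linf {m n : ℕ} (X : Matrix (Fin m) (Fin n) ℝ) : ℝ := ⨆ i, ⨆ j, |X i j|

noncomputable def frob {m n : ℕ} (X : Matrix (Fin m) (Fin n) ℝ) : ℝ :=
  Real.sqrt (∑ i, ∑ j, X i j ^ 2)

noncomputable def spec {m n : ℕ} (X : Matrix (Fin m) (Fin n) ℝ) : ℝ :=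
  ‖LinearMap.toContinuousLinearMap (Matrix.toEuclideanLin X)‖

def supp {m n : ℕ} (X : Matrix (Fin m) (Fin n) ℝ) : Set (Fin m × Fin n) :=
  {p | X p.1 p.2 ≠ 0}

noncomputable def sthr {m n : ℕ} (ζ : ℝ) (X : Matrix (Fin m) (Fin n) ℝ) :
    Matrix (Fin m) (Fin n) ℝ :=
  Matrix.of fun i j => Real.sign (X i j) * max (|X i j| - ζ) 0


/-!
Each row of `M_r v` splits into its `G_r`, `F_r` and `E_r` parts. Every rank-one term of `G_r`
and `F_r` has `p`-th entry `(Q_{r,i}ᵀ e_p) ⬝ (P Q_{t,i}ᵀ x)` for a column `x` of `L_t - L*_t`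
or `S_t - S*_t`, so by Cauchy–Schwarz it is at most `‖Q_{r,i}ᵀ e_p‖ ‖P‖₂ ‖Q_{t,i}ᵀ x‖`; for the
sparse columns of `S_t - S*_t` the last factor is at most
(number of nonzeros) · (entry bound) · `ν√(d/m_t)`.
Summing over the `n_r` images `i ∈ I_r` and bounding the regions `t ∈ Ī_i` by all of `U_r`,
the scale factors of (iii) combine with those of (i), (ii), (iv) into the weights of `ω_r` and
`α̃_r`. The `E_r` part is bounded directly through its row sparsity.
-/

open Finset

lemma l2_eq_norm {n : ℕ} (v : Fin n → ℝ) : l2 v = ‖WithLp.toLp 2 v‖ := by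
  rw [EuclideanSpace.norm_eq]
  simp [l2, sq_abs]

lemma l2_nonneg {n : ℕ} (v : Fin n → ℝ) : 0 ≤ l2 v := Real.sqrt_nonneg _

lemma spec_nonneg {m n : ℕ} (X : Matrix (Fin m) (Fin n) ℝ) : 0 ≤ spec X := norm_nonneg _

lemma vinf_nonneg {n : ℕ} (v : Fin n → ℝ) : 0 ≤ vinf v :=
  Real.iSup_nonneg fun _ => abs_nonneg _

lemma abs_le_vinf {n : ℕ} (v : Fin n → ℝ) (j : Fin n) : |v j| ≤ vinf v :=
  le_ciSup (f := fun j => |v j|) (Finite.bddAbove_range _) j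

lemma abs_le_linf {m n : ℕ} (X : Matrix (Fin m) (Fin n) ℝ) (i : Fin m) (j : Fin n) :
    |X i j| ≤ linf X :=
  (le_ciSup (f := fun j => |X i j|) (Finite.bddAbove_range _) j).trans
    (le_ciSup (Finite.bddAbove_range fun i => ⨆ j, |X i j|) i)

lemma linf_nonneg {m n : ℕ} (X : Matrix (Fin m) (Fin n) ℝ) : 0 ≤ linf X :=
  Real.iSup_nonneg fun _ => Real.iSup_nonneg fun _ => abs_nonneg _

lemma abs_dotProduct_le_l2_mul_l2 {n : ℕ} (u w : Fin n → ℝ) : |u ⬝ᵥ w| ≤ l2 u * l2 w := by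
  rw [l2_eq_norm, l2_eq_norm]
  simpa [PiLp.inner_apply, dotProduct, mul_comm] using
    abs_real_inner_le_norm (WithLp.toLp 2 u) (WithLp.toLp 2 w)

lemma l2_mulVec_le_spec_mul {m n : ℕ} (X : Matrix (Fin m) (Fin n) ℝ) (v : Fin n → ℝ) :
    l2 (X *ᵥ v) ≤ spec X * l2 v := by
  rw [l2_eq_norm, l2_eq_norm]
  simpa [spec] using
    (LinearMap.toContinuousLinearMap (Matrix.toEuclideanLin X)).le_opNorm (WithLp.toLp 2 v)

lemma l2_sum_le {ι : Type*} {n : ℕ} (s : Finset ι) (g : ι → Fin n → ℝ) :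
    l2 (∑ i ∈ s, g i) ≤ ∑ i ∈ s, l2 (g i) := by
  simp only [l2_eq_norm, WithLp.toLp_sum]
  exact norm_sum_le _ _

lemma l2_smul {n : ℕ} (c : ℝ) (v : Fin n → ℝ) : l2 (c • v) = |c| * l2 v := by
  rw [l2_eq_norm, l2_eq_norm, WithLp.toLp_smul, norm_smul, Real.norm_eq_abs]

lemma abs_mul_mul_mulVec_apply_le {k m n l : ℕ} (A : Matrix (Fin m) (Fin k) ℝ)
    (B : Matrix (Fin k) (Fin l) ℝ) (C : Matrix (Fin l) (Fin n) ℝ) (g : Fin n → ℝ) (p : Fin m) :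
    |((A * B * C) *ᵥ g) p| ≤ l2 (Aᵀ *ᵥ Pi.single p 1) * (spec B * l2 (C *ᵥ g)) := by
  have hrow : ((A * B * C) *ᵥ g) p = (Aᵀ *ᵥ Pi.single p 1) ⬝ᵥ (B *ᵥ (C *ᵥ g)) := by
    rw [Matrix.mulVec_mulVec, Matrix.mul_assoc, ← Matrix.mulVec_mulVec g A, mulVec_single_one]
    rfl
  rw [hrow]
  exact (abs_dotProduct_le_l2_mul_l2 _ _).trans
    (mul_le_mul_of_nonneg_left (l2_mulVec_le_spec_mul _ _) (l2_nonneg _))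

lemma l2_mulVec_le_card_mul {k m : ℕ} (C : Matrix (Fin k) (Fin m) ℝ) (g : Fin m → ℝ) {c K : ℝ}
    (hK : ∀ p, l2 (C *ᵥ Pi.single p 1) ≤ K) (hg : ∀ p, |g p| ≤ c) :
    l2 (C *ᵥ g) ≤ #{p | g p ≠ 0} * (c * K) := by
  have hdecomp : C *ᵥ g = ∑ p ∈ {p | g p ≠ 0}, g p • (C *ᵥ Pi.single p 1) := by
    rw [sum_filter_of_ne fun p _ h => left_ne_zero_of_smul h]
    simp_rw [← Matrix.mulVec_smul, ← Matrix.mulVec_sum]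
    congr 1
    ext j
    simp [Pi.single_apply]
  calc l2 (C *ᵥ g)
      ≤ ∑ p ∈ {p | g p ≠ 0}, |g p| * l2 (C *ᵥ Pi.single p 1) := by
        rw [hdecomp]
        refine (l2_sum_le _ _).trans_eq ?_
        simp only [l2_smul]
    _ ≤ ∑ _p ∈ {p | g p ≠ 0}, c * K :=
        sum_le_sum fun p _ =>
          mul_le_mul (hg p) (hK p) (l2_nonneg _) ((abs_nonneg _).trans (hg p))
    _ = #{p | g p ≠ 0} * (c * K) := by rw [sum_const, nsmul_eq_mul]

lemma abs_mulVec_apply_le_card_mul {m n : ℕ} (X : Matrix (Fin m) (Fin n) ℝ) (v : Fin n → ℝ)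
    (p : Fin m) : |(X *ᵥ v) p| ≤ #{j | X p j ≠ 0} * (linf X * vinf v) := by
  have hsupp : (X *ᵥ v) p = ∑ j ∈ {j | X p j ≠ 0}, X p j * v j := by
    rw [sum_filter_of_ne fun j _ h => left_ne_zero_of_mul h]
    rfl
  calc |(X *ᵥ v) p|
      ≤ ∑ j ∈ {j | X p j ≠ 0}, |X p j * v j| := hsupp ▸ abs_sum_le_sum_abs _ _
    _ ≤ ∑ _j ∈ {j | X p j ≠ 0}, linf X * vinf v :=
        sum_le_sum fun j _ => by
          rw [abs_mul]
          exact mul_le_mul (abs_le_linf X p j) (abs_le_vinf v j) (abs_nonneg _)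
            ((abs_nonneg _).trans (abs_le_linf X p j))
    _ = #{j | X p j ≠ 0} * (linf X * vinf v) := by rw [sum_const, nsmul_eq_mul]

lemma sum_sum_vecMulVec_single_mulVec_apply {ι κ : Type*} {m n : ℕ} (s : Finset ι)
    (T : ι → Finset κ) (a : ι → κ → Fin m → ℝ) (g : ι → Fin n) (v : Fin n → ℝ) (p : Fin m) :
    ((∑ i ∈ s, ∑ t ∈ T i, vecMulVec (a i t) (Pi.single (g i) 1)) *ᵥ v) p =
      ∑ i ∈ s, ∑ t ∈ T i, a i t p * v (g i) := by
  simp [Matrix.sum_mulVec, Matrix.vecMulVec_mulVec, Finset.sum_apply, mul_comm]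

lemma abs_sum_sum_mul_le {ι κ : Type*} {n : ℕ} (s : Finset ι) (T : ι → Finset κ)
    (U : Finset κ) (hTU : ∀ i ∈ s, T i ⊆ U) (b : ι → κ → ℝ) (c : κ → ℝ)
    (hc : ∀ t ∈ U, 0 ≤ c t) (hb : ∀ i ∈ s, ∀ t ∈ T i, |b i t| ≤ c t)
    (g : ι → Fin n) (v : Fin n → ℝ) :
    |∑ i ∈ s, ∑ t ∈ T i, b i t * v (g i)| ≤ #s * (∑ t ∈ U, c t) * vinf v := by
  calc |∑ i ∈ s, ∑ t ∈ T i, b i t * v (g i)|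
      ≤ ∑ i ∈ s, ∑ t ∈ T i, c t * vinf v := by
        refine (abs_sum_le_sum_abs _ _).trans (sum_le_sum fun i hi => ?_)
        refine (abs_sum_le_sum_abs _ _).trans (sum_le_sum fun t ht => ?_)
        rw [abs_mul]
        exact mul_le_mul (hb i hi t ht) (abs_le_vinf v _) (abs_nonneg _) (hc t (hTU i hi ht))
    _ ≤ ∑ _i ∈ s, ∑ t ∈ U, c t * vinf v :=
        sum_le_sum fun i hi => sum_le_sum_of_subset_of_nonneg (hTU i hi)
          fun t ht _ => mul_nonneg (hc t ht) (vinf_nonneg v)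
    _ = #s * (∑ t ∈ U, c t) * vinf v := by
        rw [sum_const, nsmul_eq_mul, ← sum_mul, mul_assoc]

lemma div_sqrt_mul_eq_sqrt_div {m n : ℝ} (hm : 0 < m) (hn : 0 < n) :
    n / √(m * n) = √(n / m) := by
  rw [Real.sqrt_mul hm.le, Real.sqrt_div' _ hm.le]
  field_simp
  rw [Real.sq_sqrt hn.le]

lemma mul_div_sqrt_mul_mul_sqrt_div {m n D c : ℝ} (hm : 0 < m) (hn : 0 < n) :
    m * (c / √(m * n)) * √(D / m) = √D * c / √n := by
  rw [Real.sqrt_mul hm.le, Real.sqrt_div' _ hm.le]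
  have : 0 < √m := Real.sqrt_pos.2 hm
  have : 0 < √n := Real.sqrt_pos.2 hn
  field_simp
  rw [Real.sq_sqrt hm.le]
  ring

lemma sqrt_rpow_quarter_scaling {D mt nt mr nr σr σt : ℝ} (hD : 0 ≤ D) (hmt : 0 < mt)
    (hnt : 0 < nt) (hmr : 0 < mr) (hnr : 0 < nr) (hσr : 0 < σr) (hσt : 0 < σt) :
    nr * (√(D / mr) * (√(σr / σt) * (mt * nt / (mr * nr)) ^ ((1 : ℝ) / 4)) * (σt / √nt)) =
      √D * σr * √(nr / mr) * (√(σt / σr) * (mt * nr / (mr * nt)) ^ ((1 : ℝ) / 4)) := by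
  have sqrt_pow_four : ∀ {x : ℝ}, 0 ≤ x → √x ^ 4 = x ^ 2 := fun hx => by
    rw [show 4 = 2 * 2 from rfl, pow_mul, Real.sq_sqrt hx]
  have rpow_quarter_pow_four : ∀ {x : ℝ}, 0 ≤ x → (x ^ ((1 : ℝ) / 4)) ^ 4 = x := fun hx => by
    rw [← Real.rpow_natCast, ← Real.rpow_mul hx]
    norm_num
  refine (pow_left_inj₀ (by positivity) (by positivity) (four_ne_zero)).1 ?_
  simp only [mul_pow, div_pow, sqrt_pow_four hD, sqrt_pow_four hnt.le,
    sqrt_pow_four (div_nonneg hD hmr.le), sqrt_pow_four (div_nonneg hσr.le hσt.le),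
    sqrt_pow_four (div_nonneg hσt.le hσr.le), sqrt_pow_four (div_nonneg hnr.le hmr.le),
    rpow_quarter_pow_four (by positivity : 0 ≤ mt * nt / (mr * nr)),
    rpow_quarter_pow_four (by positivity : 0 ≤ mt * nr / (mr * nt))]
  field_simp

lemma l2_mulVec_col_le_of_sparse {d m n : ℕ} (C : Matrix (Fin d) (Fin m) ℝ)
    (S S' E : Matrix (Fin m) (Fin n) ℝ) (hE : E = S' - S) (j : Fin n) {α c ν : ℝ} (hm : 0 < m)
    (hn : 0 < n) (hc : 0 ≤ c) (hν : 0 ≤ ν) (hcol : (#{p | E p j ≠ 0} : ℝ) ≤ α * m)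
    (hinf : linf E ≤ c / √((m : ℝ) * n))
    (hC : ∀ p, l2 (C *ᵥ Pi.single p 1) ≤ ν * √((d : ℝ) / m)) :
    l2 (C *ᵥ fun p => (S - S') p j) ≤ α * ν * √d * c / √n := by
  have hcol' : #{p | (S - S') p j ≠ 0} = #{p | E p j ≠ 0} := by
    simp only [hE, Matrix.sub_apply, ne_eq, sub_eq_zero, eq_comm]
  have hentry : ∀ p, |(S - S') p j| ≤ c / √((m : ℝ) * n) := fun p => by
    rw [← abs_neg, ← Matrix.neg_apply, neg_sub, ← hE]
    exact (abs_le_linf E p j).trans hinf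
  have hscale := mul_div_sqrt_mul_mul_sqrt_div (D := d) (c := c) (Nat.cast_pos.2 hm)
    (Nat.cast_pos.2 hn)
  calc l2 (C *ᵥ fun p => (S - S') p j)
      ≤ #{p | (S - S') p j ≠ 0} * (c / √((m : ℝ) * n) * (ν * √((d : ℝ) / m))) :=
        l2_mulVec_le_card_mul C _ hC hentry
    _ ≤ α * m * (c / √((m : ℝ) * n) * (ν * √((d : ℝ) / m))) := by
        rw [hcol']
        exact mul_le_mul_of_nonneg_right hcol (by positivity)
    _ = α * ν * √d * c / √n := by linear_combination (α * ν) * hscale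

lemma abs_mulVec_apply_le_of_row_sparse {m n : ℕ} (X : Matrix (Fin m) (Fin n) ℝ)
    (v : Fin n → ℝ) (p : Fin m) {α c : ℝ} (hm : 0 < m) (hn : 0 < n)
    (hrow : (#{j | X p j ≠ 0} : ℝ) ≤ α * n) (hinf : linf X ≤ c / √((m : ℝ) * n)) :
    |(X *ᵥ v) p| ≤ α * c * √((n : ℝ) / m) * vinf v := by
  have hscale := div_sqrt_mul_eq_sqrt_div (Nat.cast_pos.2 hm) (Nat.cast_pos.2 hn)
  calc |(X *ᵥ v) p|
      ≤ #{j | X p j ≠ 0} * (linf X * vinf v) := abs_mulVec_apply_le_card_mul X v p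
    _ ≤ α * n * (c / √((m : ℝ) * n) * vinf v) :=
        mul_le_mul hrow (mul_le_mul_of_nonneg_right hinf (vinf_nonneg v))
          (mul_nonneg (linf_nonneg X) (vinf_nonneg v)) ((Nat.cast_nonneg _).trans hrow)
    _ = α * c * √((n : ℝ) / m) * vinf v := by linear_combination (α * c * vinf v) * hscale

/-- The weight of region `t` in `ω_r` and `α̃_r`. -/
noncomputable def transferWeight {Rn : ℕ} (σs : Fin Rn → ℝ) (mr nr : Fin Rn → ℕ) (r t : Fin Rn) :
    ℝ :=
  √(σs t / σs r) * (((mr t : ℝ) * nr r) / ((mr r : ℝ) * nr t)) ^ ((1 : ℝ) / 4)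

lemma abs_transport_mulVec_apply_le {n d Rn : ℕ} {mr nr : Fin Rn → ℕ} {σs : Fin Rn → ℝ}
    {I : Fin Rn → Finset (Fin n)} {f : (t : Fin Rn) → Fin n → Fin (nr t)}
    {Q : (t : Fin Rn) → Fin n → Matrix (Fin (mr t)) (Fin d) ℝ}
    {P : Fin n → Fin Rn → Fin Rn → Matrix (Fin d) (Fin d) ℝ} {r : Fin Rn}
    {Ibar : Fin n → Finset (Fin Rn)} {U : Finset (Fin Rn)} {ν : ℝ}
    (hmr : ∀ t, 0 < mr t) (hnr : ∀ t, 0 < nr t) (hσ : ∀ t, 0 < σs t) (hν : 0 ≤ ν)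
    (hcard : #(I r) = nr r) (hIbarU : ∀ i ∈ I r, Ibar i ⊆ U)
    (hP : ∀ i ∈ I r, ∀ t ∈ Ibar i,
      spec (P i r t) ≤ √(σs r / σs t) *
        (((mr t : ℝ) * nr t) / ((mr r : ℝ) * nr r)) ^ ((1 : ℝ) / 4))
    (hQ : ∀ i p, l2 ((Q r i)ᵀ *ᵥ Pi.single p 1) ≤ ν * √((d : ℝ) / mr r))
    (X : (t : Fin Rn) → Matrix (Fin (mr t)) (Fin (nr t)) ℝ) (K : Fin Rn → ℝ)
    (hK : ∀ t ∈ U, 0 ≤ K t)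
    (hX : ∀ i ∈ I r, ∀ t ∈ Ibar i,
      l2 ((Q t i)ᵀ *ᵥ fun p => X t p (f t i)) ≤ K t * σs t / √(nr t))
    (v : Fin (nr r) → ℝ) (p : Fin (mr r)) :
    |((∑ i ∈ I r, ∑ t ∈ Ibar i, vecMulVec
        ((Q r i * P i r t * (Q t i)ᵀ) *ᵥ fun p => X t p (f t i)) (Pi.single (f r i) 1)) *ᵥ v) p|
      ≤ ν * √d * (∑ t ∈ U, K t * transferWeight σs mr nr r t) * σs r *
          √((nr r : ℝ) / mr r) * vinf v := by
  set c : Fin Rn → ℝ := fun t => ν * √((d : ℝ) / mr r) * ((√(σs r / σs t) *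
    (((mr t : ℝ) * nr t) / ((mr r : ℝ) * nr r)) ^ ((1 : ℝ) / 4)) * (K t * σs t / √(nr t)))
  have hterm : ∀ i ∈ I r, ∀ t ∈ Ibar i,
      |((Q r i * P i r t * (Q t i)ᵀ) *ᵥ fun p => X t p (f t i)) p| ≤ c t := fun i hi t ht =>
    (abs_mul_mul_mulVec_apply_le _ _ _ _ p).trans <|
      mul_le_mul (hQ i p) (mul_le_mul (hP i hi t ht) (hX i hi t ht) (l2_nonneg _)
          ((spec_nonneg _).trans (hP i hi t ht)))
        (mul_nonneg (spec_nonneg _) (l2_nonneg _)) (mul_nonneg hν (Real.sqrt_nonneg _))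
  have hc : ∀ t ∈ U, 0 ≤ c t := fun t ht =>
    mul_nonneg (mul_nonneg hν (Real.sqrt_nonneg _)) <| mul_nonneg
      (mul_nonneg (Real.sqrt_nonneg _) (Real.rpow_nonneg (by positivity) _))
      (div_nonneg (mul_nonneg (hK t ht) (hσ t).le) (Real.sqrt_nonneg _))
  rw [sum_sum_vecMulVec_single_mulVec_apply]
  refine (abs_sum_sum_mul_le _ _ U hIbarU _ c hc hterm _ v).trans_eq ?_
  rw [hcard, mul_sum, mul_sum, sum_mul, sum_mul, sum_mul,
    sum_mul]
  refine sum_congr rfl fun t _ => ?_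
  have hscale := sqrt_rpow_quarter_scaling (D := d) (Nat.cast_nonneg _)
    (Nat.cast_pos.2 (hmr t)) (Nat.cast_pos.2 (hnr t)) (Nat.cast_pos.2 (hmr r))
    (Nat.cast_pos.2 (hnr r)) (hσ r) (hσ t)
  simp only [c, transferWeight]
  linear_combination (ν * K t * vinf v) * hscale

theorem stmt8_general (n d Rn : ℕ) (k : ℕ)
    (mr nr : Fin Rn → ℕ) (hmr : ∀ t, 0 < mr t) (hnr : ∀ t, 0 < nr t)
    (I : Fin Rn → Finset (Fin n)) (hcard : ∀ t, (I t).card = nr t)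
    (f : (t : Fin Rn) → Fin n → Fin (nr t))
    (Q : (t : Fin Rn) → Fin n → Matrix (Fin (mr t)) (Fin d) ℝ)
    (P : Fin n → Fin Rn → Fin Rn → Matrix (Fin d) (Fin d) ℝ)
    (σs : Fin Rn → ℝ) (hσ : ∀ t, 0 < σs t)
    (L Lstar S Sstar E : (t : Fin Rn) → Matrix (Fin (mr t)) (Fin (nr t)) ℝ)
    (hEdef : ∀ t, E t = Sstar t - S t)
    (α : Fin Rn → ℝ) (hα : ∀ t, 0 < α t) (α' : ℝ)
    (ν l₀ s₀ q : ℝ) (hν : 0 < ν) (hl₀ : 0 < l₀) (hs₀ : 0 < s₀) (hq : 0 < q)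
    (r : Fin Rn) (hIr : (I r).Nonempty)
    (Ibar : Fin n → Finset (Fin Rn))
    (hIbar : ∀ i, Ibar i = Finset.univ.filter fun t => i ∈ I t)
    (U : Finset (Fin Rn))
    (hU : U = (I r).biUnion fun i => Finset.univ.filter fun t => i ∈ I t)
    (ω αt : ℝ)
    (hω : ω = ∑ t ∈ U, Real.sqrt (σs t / σs r) *
      (((mr t : ℝ) * nr r) / ((mr r : ℝ) * nr t)) ^ ((1 : ℝ) / 4))
    (hαt : αt = ∑ t ∈ U, α t * Real.sqrt (σs t / σs r) *
      (((mr t : ℝ) * nr r) / ((mr r : ℝ) * nr t)) ^ ((1 : ℝ) / 4))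
    (h1 : ∀ i ∈ I r, ∀ t ∈ Ibar i,
      l2 ((Q t i)ᵀ *ᵥ fun p => (L t - Lstar t) p (f t i)) ≤
        l₀ * σs t * q ^ k / Real.sqrt (nr t))
    (h2col : ∀ t ∈ U, ∀ j : Fin (nr t),
      ((Finset.univ.filter fun p => E t p j ≠ 0).card : ℝ) ≤ α t * mr t)
    (h2inf : ∀ t ∈ U, linf (E t) ≤ s₀ * σs t * q ^ k / Real.sqrt ((mr t : ℝ) * nr t))
    (h2row : ∀ p : Fin (mr r),
      ((Finset.univ.filter fun j => E r p j ≠ 0).card : ℝ) ≤ α' * nr r)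
    (h3 : ∀ i ∈ I r, ∀ t ∈ Ibar i,
      spec (P i r t) ≤ Real.sqrt (σs r / σs t) *
        (((mr t : ℝ) * nr t) / ((mr r : ℝ) * nr r)) ^ ((1 : ℝ) / 4))
    (h4 : ∀ (t : Fin Rn) (i : Fin n) (p : Fin (mr t)),
      l2 ((Q t i)ᵀ *ᵥ Pi.single p 1) ≤ ν * Real.sqrt ((d : ℝ) / mr t))
    (G F Mr : Matrix (Fin (mr r)) (Fin (nr r)) ℝ)
    (hG : G = ∑ i ∈ I r, ∑ t ∈ Ibar i, Matrix.vecMulVec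
      ((Q r i * P i r t * (Q t i)ᵀ) *ᵥ fun p => (L t - Lstar t) p (f t i))
      (Pi.single (f r i) 1))
    (hF : F = ∑ i ∈ I r, ∑ t ∈ Ibar i, Matrix.vecMulVec
      ((Q r i * P i r t * (Q t i)ᵀ) *ᵥ fun p => (S t - Sstar t) p (f t i))
      (Pi.single (f r i) 1))
    (hM : Mr = G + F + E r) :
    ∀ v : Fin (nr r) → ℝ,
      vinf (Mr *ᵥ v) ≤
        (s₀ * (α' + αt * ν ^ 2 * d) + l₀ * ν * Real.sqrt d * ω) *
          σs r * q ^ k * Real.sqrt ((nr r : ℝ) / mr r) * vinf v := by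
  intro v
  have hIbarU : ∀ i ∈ I r, Ibar i ⊆ U := fun i hi t ht => by
    rw [hU, mem_biUnion]
    exact ⟨i, hi, hIbar i ▸ ht⟩
  have hrU : r ∈ U := by
    obtain ⟨i, hi⟩ := hIr
    exact hIbarU i hi (by simp [hIbar, hi])
  have hG_le := abs_transport_mulVec_apply_le hmr hnr hσ hν.le (hcard r) hIbarU h3 (h4 r)
    (fun t => L t - Lstar t) (fun _ => l₀ * q ^ k) (fun _ _ => by positivity)
    (fun i hi t ht => (h1 i hi t ht).trans_eq (by ring)) v
  have hF_le := abs_transport_mulVec_apply_le hmr hnr hσ hν.le (hcard r) hIbarU h3 (h4 r)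
    (fun t => S t - Sstar t) (fun t => s₀ * q ^ k * ν * √d * α t)
    (fun t _ => by have := hα t; positivity)
    (fun i hi t ht => (l2_mulVec_col_le_of_sparse _ _ _ _ (hEdef t) (f t i) (hmr t) (hnr t)
      (by have := hσ t; positivity) hν.le (h2col t (hIbarU i hi ht) _) (h2inf t (hIbarU i hi ht))
      (h4 t i)).trans_eq (by ring)) v
  have hE_le := fun p => abs_mulVec_apply_le_of_row_sparse (E r) v p (hmr r) (hnr r) (h2row p)
    (h2inf r hrU)
  have hω' : ∑ t ∈ U, l₀ * q ^ k * transferWeight σs mr nr r t = l₀ * q ^ k * ω := by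
    rw [hω, mul_sum]
    rfl
  have hαt' : ∑ t ∈ U, s₀ * q ^ k * ν * √d * α t * transferWeight σs mr nr r t =
      s₀ * q ^ k * ν * √d * αt := by
    rw [hαt, mul_sum]
    exact sum_congr rfl fun t _ => by simp only [transferWeight]; ring
  have : Nonempty (Fin (mr r)) := ⟨⟨0, hmr r⟩⟩
  refine ciSup_le fun p => ?_
  calc |(Mr *ᵥ v) p| ≤ |(G *ᵥ v) p| + |(F *ᵥ v) p| + |(E r *ᵥ v) p| := by
        rw [hM, add_mulVec, add_mulVec]
        exact abs_add_three _ _ _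
    _ ≤ _ := add_le_add_three (hG ▸ hG_le p) (hF ▸ hF_le p) (hE_le p)
    _ = _ := by
        rw [hω', hαt']
        linear_combination (s₀ * αt * ν ^ 2 * σs r * q ^ k * √((nr r : ℝ) / mr r) * vinf v) *
          Real.mul_self_sqrt (Nat.cast_nonneg (α := ℝ) d)

/-- Lemma: multi-region bound on `‖M_r v‖_{ℓ∞}`. -/
theorem stmt8 (n d Rn : ℕ) (k : ℕ) (hn : 0 < n) (hd : 0 < d)
    (mr nr : Fin Rn → ℕ) (hmr : ∀ t, 0 < mr t) (hnr : ∀ t, 0 < nr t)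
    (I : Fin Rn → Finset (Fin n)) (hcard : ∀ t, (I t).card = nr t)
    (f : (t : Fin Rn) → Fin n → Fin (nr t))
    (hf : ∀ t, Set.BijOn (f t) ↑(I t) Set.univ)
    (Q : (t : Fin Rn) → Fin n → Matrix (Fin (mr t)) (Fin d) ℝ)
    (hQortho : ∀ t i, (Q t i)ᵀ * Q t i = 1)
    (P : Fin n → Fin Rn → Fin Rn → Matrix (Fin d) (Fin d) ℝ)
    (σs : Fin Rn → ℝ) (hσ : ∀ t, 0 < σs t)
    (L Lstar S Sstar E : (t : Fin Rn) → Matrix (Fin (mr t)) (Fin (nr t)) ℝ)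
    (hEdef : ∀ t, E t = Sstar t - S t)
    (α : Fin Rn → ℝ) (hα : ∀ t, 0 < α t) (α' : ℝ) (hα' : 0 < α')
    (ν l₀ s₀ q : ℝ) (hν : 0 < ν) (hl₀ : 0 < l₀) (hs₀ : 0 < s₀) (hq : 0 < q)
    (r : Fin Rn) (hIr : (I r).Nonempty)
    (Ibar : Fin n → Finset (Fin Rn))
    (hIbar : ∀ i, Ibar i = Finset.univ.filter fun t => i ∈ I t)
    (U : Finset (Fin Rn))
    (hU : U = (I r).biUnion fun i => Finset.univ.filter fun t => i ∈ I t)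
    (ω αt : ℝ)
    (hω : ω = ∑ t ∈ U, Real.sqrt (σs t / σs r) *
      (((mr t : ℝ) * nr r) / ((mr r : ℝ) * nr t)) ^ ((1 : ℝ) / 4))
    (hαt : αt = ∑ t ∈ U, α t * Real.sqrt (σs t / σs r) *
      (((mr t : ℝ) * nr r) / ((mr r : ℝ) * nr t)) ^ ((1 : ℝ) / 4))
    (h1 : ∀ i ∈ I r, ∀ t ∈ Ibar i,
      l2 ((Q t i)ᵀ *ᵥ fun p => (L t - Lstar t) p (f t i)) ≤
        l₀ * σs t * q ^ k / Real.sqrt (nr t))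
    (h2col : ∀ t ∈ U, ∀ j : Fin (nr t),
      ((Finset.univ.filter fun p => E t p j ≠ 0).card : ℝ) ≤ α t * mr t)
    (h2inf : ∀ t ∈ U, linf (E t) ≤ s₀ * σs t * q ^ k / Real.sqrt ((mr t : ℝ) * nr t))
    (h2row : ∀ p : Fin (mr r),
      ((Finset.univ.filter fun j => E r p j ≠ 0).card : ℝ) ≤ α' * nr r)
    (h3 : ∀ i ∈ I r, ∀ t ∈ Ibar i,
      spec (P i r t) ≤ Real.sqrt (σs r / σs t) *
        (((mr t : ℝ) * nr t) / ((mr r : ℝ) * nr r)) ^ ((1 : ℝ) / 4))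
    (h4 : ∀ (t : Fin Rn) (i : Fin n) (p : Fin (mr t)),
      l2 ((Q t i)ᵀ *ᵥ Pi.single p 1) ≤ ν * Real.sqrt ((d : ℝ) / mr t))
    (G F Mr : Matrix (Fin (mr r)) (Fin (nr r)) ℝ)
    (hG : G = ∑ i ∈ I r, ∑ t ∈ Ibar i, Matrix.vecMulVec
      ((Q r i * P i r t * (Q t i)ᵀ) *ᵥ fun p => (L t - Lstar t) p (f t i))
      (Pi.single (f r i) 1))
    (hF : F = ∑ i ∈ I r, ∑ t ∈ Ibar i, Matrix.vecMulVec
      ((Q r i * P i r t * (Q t i)ᵀ) *ᵥ fun p => (S t - Sstar t) p (f t i))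
      (Pi.single (f r i) 1))
    (hM : Mr = G + F + E r) :
    ∀ v : Fin (nr r) → ℝ,
      vinf (Mr *ᵥ v) ≤
        (s₀ * (α' + αt * ν ^ 2 * d) + l₀ * ν * Real.sqrt d * ω) *
          σs r * q ^ k * Real.sqrt ((nr r : ℝ) / mr r) * vinf v :=
  stmt8_general n d Rn k mr nr hmr hnr I hcard f Q P σs hσ L Lstar S Sstar E hEdef α hα α' ν l₀ s₀ q
    hν hl₀ hs₀ hq r hIr Ibar hIbar U hU ω αt hω hαt h1 h2col h2inf h2row h3 h4 G F Mr hG hF hM
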